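/- Let (k₁, k₂, k₃) = (2, 2, 2) and w = (0, 0, 0, (1/2)·x⁻¹, −(1/2)·x⁻², x⁻³) (components in the order (a₁₂, a₁₃, a₂₃, b₁, b₂, b₃)). Then E″(w) ∈ B, F″(w) ∈ B, w ∉ B, and every z ∈ V with E″(z) ∈ B and F″(z) ∈ B satisfies z ∈ ℂ·w + B. In other words, the 𝔰″-invariant part of H¹(ℂℙ¹, T₂) is one-dimensional, spanned by the class of w. -/

import Mathlib

noncomputable section

open LaurentPolynomial

/-- `L = ℂ[x, x⁻¹]`, the Laurent polynomials over `ℂ`. -/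
abbrev L : Type := LaurentPolynomial ℂ

/-- The coefficient of `x^n` in a Laurent polynomial. -/
def coeffL (p : L) (n : ℤ) : ℂ := (AddMonoidAlgebra.coeff p : ℤ →₀ ℂ) n

lemma coeffL_zero (n : ℤ) : coeffL 0 n = 0 := rfl

lemma coeffL_add (a b : L) (n : ℤ) : coeffL (a + b) n = coeffL a n + coeffL b n := by
  unfold coeffL; simp

lemma coeffL_smul (c : ℂ) (a : L) (n : ℤ) : coeffL (c • a) n = c * coeffL a n := by
  unfold coeffL; simp

/-- `L₊`: Laurent polynomials involving only nonnegative powers of `x`. -/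
def Lplus : Submodule ℂ L where
  carrier := {p | ∀ n : ℤ, n < 0 → coeffL p n = 0}
  zero_mem' := fun n _ => coeffL_zero n
  add_mem' := by intro a b ha hb n hn; rw [coeffL_add, ha n hn, hb n hn, add_zero]
  smul_mem' := by intro c p hp n hn; rw [coeffL_smul, hp n hn, mul_zero]

/-- `L₋`: Laurent polynomials involving only nonpositive powers of `x`. -/
def Lminus : Submodule ℂ L where
  carrier := {p | ∀ n : ℤ, 0 < n → coeffL p n = 0}
  zero_mem' := fun n _ => coeffL_zero n
  add_mem' := by intro a b ha hb n hn; rw [coeffL_add, ha n hn, hb n hn, add_zero]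
  smul_mem' := by intro c p hp n hn; rw [coeffL_smul, hp n hn, mul_zero]

/-- The derivative `d/dx` on Laurent polynomials. -/
def D (p : L) : L := Finsupp.sum (AddMonoidAlgebra.coeff p : ℤ →₀ ℂ) fun n a => ((n : ℂ) * a) • T (n - 1)

/-- `V = L⁶`, the model of Čech 1-cochains with values in `T₂`: a tuple
`v = (a₁₂, a₁₃, a₂₃, b₁, b₂, b₃)` (components `v 0, …, v 5`) encodes the
vector field `Σ_{i<j} a_{ij}(x)ξᵢξⱼ∂/∂x + Σ_t b_t(x)ξ₁ξ₂ξ₃∂/∂ξ_t` on `U₀ ∩ U₁`. -/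
abbrev V : Type := Fin 6 → L

/-- `B₀ = (L₊)⁶`: cochains holomorphic in `U₀`. -/
def B0 : Submodule ℂ V := Submodule.pi Set.univ fun _ => Lplus

/-- The linear map `v ↦ x^m · (v i)`. -/
def cndA (m : ℤ) (i : Fin 6) : V →ₗ[ℂ] L :=
  (LinearMap.mulLeft ℂ (T m)).comp (LinearMap.proj i)

/-- The linear map `v ↦ x^m · (v i − c·x⁻¹·(v j))`. -/
def cndB (m : ℤ) (c : ℂ) (i j : Fin 6) : V →ₗ[ℂ] L :=
  (LinearMap.mulLeft ℂ (T m)).comp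
    (LinearMap.proj i - c • (LinearMap.mulLeft ℂ (T (-1))).comp (LinearMap.proj j))

/-- `B₁`: cochains holomorphic in `U₁`, i.e. `v` with
`x^(kᵢ+kⱼ−2)·a_{ij} ∈ L₋` for all `i < j` and
`x^(d−k_t)·(b_t − σ_t·k_t·x⁻¹·a_{(t)}) ∈ L₋` for `t = 1, 2, 3`
(σ₁ = 1, σ₂ = −1, σ₃ = 1, a₍₁₎ = a₂₃, a₍₂₎ = a₁₃, a₍₃₎ = a₁₂, d = k₁+k₂+k₃). -/
def B1 (k1 k2 k3 : ℤ) : Submodule ℂ V :=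
  Lminus.comap (cndA (k1 + k2 - 2) 0) ⊓
  Lminus.comap (cndA (k1 + k3 - 2) 1) ⊓
  Lminus.comap (cndA (k2 + k3 - 2) 2) ⊓
  Lminus.comap (cndB (k2 + k3) ((k1 : ℂ)) 3 2) ⊓
  Lminus.comap (cndB (k1 + k3) (-(k2 : ℂ)) 4 1) ⊓
  Lminus.comap (cndB (k1 + k2) ((k3 : ℂ)) 5 0)

/-- The coboundary subspace `B = B₀ + B₁`. -/
def B (k1 k2 k3 : ℤ) : Submodule ℂ V := B0 ⊔ B1 k1 k2 k3

/-- Action of `e = ∂/∂x` on cocycles: the componentwise derivative. -/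
def Eop : V → V := fun v i => D (v i)

/-- Action of `f = ∂/∂y` on cocycles, with components
`a_{ij} ↦ (2 − kᵢ − kⱼ)·x·a_{ij} − x²·a_{ij}′` and
`b_t ↦ σ_t·k_t·a₍ₜ₎ − (d − k_t)·x·b_t − x²·b_t′`. -/
def Fop (k1 k2 k3 : ℤ) : V → V := fun v =>
  ![((2 - k1 - k2 : ℤ) : ℂ) • (T 1 * v 0) - T 2 * D (v 0),
    ((2 - k1 - k3 : ℤ) : ℂ) • (T 1 * v 1) - T 2 * D (v 1),
    ((2 - k2 - k3 : ℤ) : ℂ) • (T 1 * v 2) - T 2 * D (v 2),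
    (k1 : ℂ) • v 2 - ((k2 + k3 : ℤ) : ℂ) • (T 1 * v 3) - T 2 * D (v 3),
    -((k2 : ℂ) • v 1) - ((k1 + k3 : ℤ) : ℂ) • (T 1 * v 4) - T 2 * D (v 4),
    (k3 : ℂ) • v 0 - ((k1 + k2 : ℤ) : ℂ) • (T 1 * v 5) - T 2 * D (v 5)]

/-- `N(v) = (0, 0, a₁₃, −b₂, 0, 0)`; `e′ = ∂/∂x + ξ₂∂/∂ξ₁` acts by `E′ = E + N`. -/
def Nop : V → V := fun v => ![0, 0, v 1, -v 4, 0, 0]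

/-- `M(v) = (0, a₂₃, 0, 0, −b₁, 0)`; `f′ = ∂/∂y + η₁∂/∂η₂` acts by `F′ = F + M`. -/
def Mop : V → V := fun v => ![0, v 2, 0, 0, -v 3, 0]

/-- The action `E′ = E + N` of `e′ = ∂/∂x + ξ₂∂/∂ξ₁`. -/
def E'op : V → V := fun v => Eop v + Nop v

/-- The action `F′ = F + M` of `f′ = ∂/∂y + η₁∂/∂η₂`. -/
def F'op (k1 k2 k3 : ℤ) : V → V := fun v => Fop k1 k2 k3 v + Mop v

/-- `N″(v) = (0, a₁₂, a₁₃, −b₂, −b₃, 0)`;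
`e″ = ∂/∂x + ξ₂∂/∂ξ₁ + ξ₃∂/∂ξ₂` acts by `E″ = E + N″`. -/
def N''op : V → V := fun v => ![0, v 0, v 1, -v 4, -v 5, 0]

/-- `M″(v) = (2a₁₃, 2a₂₃, 0, 0, −2b₁, −2b₂)`;
`f″ = ∂/∂y + 2η₁∂/∂η₂ + 2η₂∂/∂η₃` acts by `F″ = F + M″`. -/
def M''op : V → V := fun v => ![(2 : ℂ) • v 1, (2 : ℂ) • v 2, 0, 0, -((2 : ℂ) • v 3), -((2 : ℂ) • v 4)]

/-- The action `E″ = E + N″` of `e″`. -/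
def E''op : V → V := fun v => Eop v + N''op v

/-- The action `F″ = F + M″` of `f″`. -/
def F''op (k1 k2 k3 : ℤ) : V → V := fun v => Fop k1 k2 k3 v + M''op v

/-! For `k = (2, 2, 2)`, `B₀` absorbs every nonnegative power of `x` and `B₁` only constrains
the coefficients of `x⁻¹, x⁻², x⁻³`, so the class of a cochain modulo `B` is given by twelve
numbers: the coefficients of `x⁻¹` in the `a_{ij}` and of `x⁻¹, x⁻², x⁻³` in the `b_t`, the last
corrected by `σ_t·2` times the coefficient of `x⁻²` in `a_{(t)}`. Expanded in these coordinates,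
`E″z ∈ B` and `F″z ∈ B` force all of them to vanish except the coefficient `c/2` of `x⁻¹` in `b₁`,
which also fixes the coefficient `-c/2` of `x⁻²` in `b₂` and the corrected one `c` of `x⁻³` in `b₃`:
these are the coordinates of `c • w`. -/

attribute [simp] coeffL_zero coeffL_add coeffL_smul

@[simp]
lemma coeffL_neg (p : L) (n : ℤ) : coeffL (-p) n = -coeffL p n := by
  simp [coeffL]

@[simp]
lemma coeffL_sub (p q : L) (n : ℤ) : coeffL (p - q) n = coeffL p n - coeffL q n := by
  simp [coeffL]

@[simp]
lemma coeffL_T (m n : ℤ) : coeffL (T m) n = if n = m then 1 else 0 := by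
  unfold coeffL
  erw [Finsupp.single_apply]
  simp [eq_comm]

@[simp]
lemma coeffL_T_mul (m : ℤ) (p : L) (n : ℤ) : coeffL (T m * p) n = coeffL p (n - m) := by
  unfold coeffL
  erw [AddMonoidAlgebra.coeff_single_mul_apply]
  rw [one_mul, neg_add_eq_sub]

@[simp]
lemma coeffL_D (p : L) (n : ℤ) : coeffL (D p) n = ((n + 1 : ℤ) : ℂ) * coeffL p (n + 1) := by
  unfold coeffL D
  rw [Finsupp.sum, AddMonoidAlgebra.coeff_sum, Finsupp.finsetSum_apply]
  have hterm (m : ℤ) (a : ℂ) : (AddMonoidAlgebra.coeff (((m : ℂ) * a) • T (m - 1) : L)) n =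
      if m = n + 1 then ((n + 1 : ℤ) : ℂ) * a else 0 := by
    rw [AddMonoidAlgebra.coeff_smul_apply]
    erw [Finsupp.single_apply]
    by_cases hm : m = n + 1
    · simp [hm]
    · simp [hm, show m - 1 ≠ n by omega]
  simp_rw [hterm, Finset.sum_ite_eq', Finsupp.mem_support_iff]
  split_ifs with h
  · rfl
  · rw [not_not.mp h, mul_zero]

def principalPart (p : L) : L :=
  AddMonoidAlgebra.ofCoeff ((AddMonoidAlgebra.coeff p).filter (· < 0))

lemma coeffL_principalPart (p : L) (n : ℤ) :
    coeffL (principalPart p) n = if n < 0 then coeffL p n else 0 :=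
  Finsupp.filter_apply _ _ _

lemma sub_principalPart_mem_Lplus (p : L) : p - principalPart p ∈ Lplus := by
  intro n hn
  simp [coeffL_principalPart, hn]

lemma mem_B0_iff {v : V} : v ∈ B0 ↔ ∀ i, ∀ n < 0, coeffL (v i) n = 0 :=
  ⟨fun h i => Submodule.mem_pi.mp h i (Set.mem_univ i),
    fun h => Submodule.mem_pi.mpr fun i _ => h i⟩

lemma T_mul_mem_Lminus_iff {m : ℤ} {p : L} : T m * p ∈ Lminus ↔ ∀ n, 0 < n + m → coeffL p n = 0 := by
  refine ⟨fun h n hn => ?_, fun h n hn => ?_⟩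
  · simpa only [coeffL_T_mul, add_sub_cancel_right] using h (n + m) hn
  · rw [coeffL_T_mul]
    exact h _ (by omega)

lemma mem_B1_iff {k1 k2 k3 : ℤ} {v : V} : v ∈ B1 k1 k2 k3 ↔
    (∀ n, 0 < n + (k1 + k2 - 2) → coeffL (v 0) n = 0) ∧
    (∀ n, 0 < n + (k1 + k3 - 2) → coeffL (v 1) n = 0) ∧
    (∀ n, 0 < n + (k2 + k3 - 2) → coeffL (v 2) n = 0) ∧
    (∀ n, 0 < n + (k2 + k3) → coeffL (v 3) n = k1 * coeffL (v 2) (n + 1)) ∧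
    (∀ n, 0 < n + (k1 + k3) → coeffL (v 4) n = -k2 * coeffL (v 1) (n + 1)) ∧
    (∀ n, 0 < n + (k1 + k2) → coeffL (v 5) n = k3 * coeffL (v 0) (n + 1)) := by
  have hB (m : ℤ) (c : ℂ) (i j : Fin 6) :
      cndB m c i j v ∈ Lminus ↔ ∀ n, 0 < n + m → coeffL (v i) n = c * coeffL (v j) (n + 1) := by
    rw [cndB, LinearMap.comp_apply, LinearMap.mulLeft_apply, T_mul_mem_Lminus_iff]
    simp only [LinearMap.sub_apply, LinearMap.smul_apply, LinearMap.comp_apply,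
      LinearMap.mulLeft_apply, LinearMap.proj_apply, coeffL_sub, coeffL_smul, coeffL_T_mul,
      sub_neg_eq_add, sub_eq_zero]
  simp only [B1, Submodule.mem_inf, Submodule.mem_comap, hB, cndA, LinearMap.comp_apply,
    LinearMap.mulLeft_apply, LinearMap.proj_apply, T_mul_mem_Lminus_iff, and_assoc]

/-- A field named after a component concerns its coefficient of `x⁻¹`; one and two primes
refer to `x⁻²` and `x⁻³`. -/
structure IsCoboundaryCoeff (v : V) : Prop where
  a₁₂ : coeffL (v 0) (-1) = 0
  a₁₃ : coeffL (v 1) (-1) = 0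
  a₂₃ : coeffL (v 2) (-1) = 0
  b₁ : coeffL (v 3) (-1) = 0
  b₂ : coeffL (v 4) (-1) = 0
  b₃ : coeffL (v 5) (-1) = 0
  b₁' : coeffL (v 3) (-2) = 0
  b₂' : coeffL (v 4) (-2) = 0
  b₃' : coeffL (v 5) (-2) = 0
  b₁'' : coeffL (v 3) (-3) = 2 * coeffL (v 2) (-2)
  b₂'' : coeffL (v 4) (-3) = -2 * coeffL (v 1) (-2)
  b₃'' : coeffL (v 5) (-3) = 2 * coeffL (v 0) (-2)

namespace IsCoboundaryCoeff

lemma of_mem_B1 {v : V} (hv : v ∈ B1 2 2 2) : IsCoboundaryCoeff v := by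
  obtain ⟨ha₁₂, ha₁₃, ha₂₃, hb₁, hb₂, hb₃⟩ := mem_B1_iff.mp hv
  exact
    { a₁₂ := ha₁₂ (-1) (by norm_num)
      a₁₃ := ha₁₃ (-1) (by norm_num)
      a₂₃ := ha₂₃ (-1) (by norm_num)
      b₁ := by simpa [ha₂₃ 0 (by norm_num)] using hb₁ (-1) (by norm_num)
      b₂ := by simpa [ha₁₃ 0 (by norm_num)] using hb₂ (-1) (by norm_num)
      b₃ := by simpa [ha₁₂ 0 (by norm_num)] using hb₃ (-1) (by norm_num)
      b₁' := by simpa [ha₂₃ (-1) (by norm_num)] using hb₁ (-2) (by norm_num)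
      b₂' := by simpa [ha₁₃ (-1) (by norm_num)] using hb₂ (-2) (by norm_num)
      b₃' := by simpa [ha₁₂ (-1) (by norm_num)] using hb₃ (-2) (by norm_num)
      b₁'' := by simpa using hb₁ (-3) (by norm_num)
      b₂'' := by simpa using hb₂ (-3) (by norm_num)
      b₃'' := by simpa using hb₃ (-3) (by norm_num) }

lemma congr_principalPart {u v : V} (huv : ∀ i, ∀ n < 0, coeffL (u i) n = coeffL (v i) n)
    (hu : IsCoboundaryCoeff u) : IsCoboundaryCoeff v := by
  obtain ⟨h₁, h₂, h₃, h₄, h₅, h₆, h₇, h₈, h₉, h₁₀, h₁₁, h₁₂⟩ := hu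
  simp only [huv _ _ (show (-1 : ℤ) < 0 by norm_num), huv _ _ (show (-2 : ℤ) < 0 by norm_num),
    huv _ _ (show (-3 : ℤ) < 0 by norm_num)] at *
  exact ⟨h₁, h₂, h₃, h₄, h₅, h₆, h₇, h₈, h₉, h₁₀, h₁₁, h₁₂⟩

end IsCoboundaryCoeff

lemma principalPart_mem_B1 {v : V} (hv : IsCoboundaryCoeff v) :
    (fun i => principalPart (v i)) ∈ B1 2 2 2 := by
  obtain ⟨h₁, h₂, h₃, h₄, h₅, h₆, h₇, h₈, h₉, h₁₀, h₁₁, h₁₂⟩ := hv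
  refine mem_B1_iff.mpr ⟨?_, ?_, ?_, ?_, ?_, ?_⟩ <;> intro n hn <;>
    obtain rfl | rfl | rfl | hn := (by omega : n = -1 ∨ n = -2 ∨ n = -3 ∨ 0 ≤ n) <;>
    grind [coeffL_principalPart]

lemma mem_B_iff {v : V} : v ∈ B 2 2 2 ↔ IsCoboundaryCoeff v := by
  refine ⟨fun h => ?_, fun hv => ?_⟩
  · obtain ⟨p, hp, q, hq, rfl⟩ := Submodule.mem_sup.mp h
    refine (IsCoboundaryCoeff.of_mem_B1 hq).congr_principalPart fun i n hn => ?_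
    simp [mem_B0_iff.mp hp i n hn]
  · rw [← sub_add_cancel v fun i => principalPart (v i)]
    exact Submodule.add_mem_sup (fun i _ => sub_principalPart_mem_Lplus (v i))
      (principalPart_mem_B1 hv)

def w₀ : V := ![0, 0, 0, (1 / 2 : ℂ) • T (-1), -((1 / 2 : ℂ) • T (-2)), T (-3)]

lemma isCoboundaryCoeff_E''op_w₀ : IsCoboundaryCoeff (E''op w₀) := by
  constructor <;> simp [E''op, Eop, N''op, w₀]

lemma isCoboundaryCoeff_F''op_w₀ : IsCoboundaryCoeff (F''op 2 2 2 w₀) := by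
  constructor <;>
    simp only [F''op, Fop, M''op, w₀, Pi.add_apply, Matrix.cons_val, coeffL_add, coeffL_sub,
      coeffL_neg, coeffL_smul, coeffL_T_mul, coeffL_D, coeffL_T, coeffL_zero] <;>
    norm_num

lemma not_isCoboundaryCoeff_w₀ : ¬ IsCoboundaryCoeff w₀ := fun h => by
  simpa [w₀] using h.b₁

lemma IsCoboundaryCoeff.sub_smul_w₀ {z : V} (hE : IsCoboundaryCoeff (E''op z))
    (hF : IsCoboundaryCoeff (F''op 2 2 2 z)) :
    IsCoboundaryCoeff (z - (2 * coeffL (z 3) (-1)) • w₀) := by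
  obtain ⟨-, e₂, e₃, e₄, e₅, -, e₇, e₈, -, -, -, -⟩ := hE
  obtain ⟨-, f₂, -, f₄, -, -, f₇, f₈, f₉, -, -, -⟩ := hF
  simp only [E''op, Eop, N''op, Pi.add_apply, Matrix.cons_val, coeffL_add, coeffL_neg,
    coeffL_D] at e₂ e₃ e₄ e₅ e₇ e₈
  norm_num at e₂ e₃ e₄ e₅ e₇ e₈
  simp only [F''op, Fop, M''op, Pi.add_apply, Matrix.cons_val, coeffL_add, coeffL_sub, coeffL_neg,
    coeffL_smul, coeffL_T_mul, coeffL_D, coeffL_zero] at f₂ f₄ f₇ f₈ f₉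
  norm_num at f₂ f₄ f₇ f₈ f₉
  have hb₁' : coeffL (z 3) (-2) = 0 := by linear_combination f₂ - f₄ / 2
  have hb₂' : coeffL (z 4) (-2) = -coeffL (z 3) (-1) := by linear_combination -e₇
  constructor <;> simp only [w₀, Pi.sub_apply, Pi.smul_apply, Matrix.cons_val, coeffL_sub,
    coeffL_smul, coeffL_neg, coeffL_T, coeffL_zero] <;> norm_num
  case a₁₂ => exact e₂
  case a₁₃ => exact e₃
  case a₂₃ => exact f₂
  case b₁ => ring
  case b₂ => exact e₄
  case b₃ => exact e₅
  case b₁' => exact hb₁'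
  case b₂' => linear_combination hb₂'
  case b₃' => linear_combination -e₈ - e₄
  case b₁'' => linear_combination -f₇
  case b₂'' => linear_combination -f₈ - 2 * hb₁'
  case b₃'' => linear_combination -f₉ - 2 * hb₂'

/-- For `(k₁, k₂, k₃) = (2, 2, 2)`, the 𝔰″-invariant part of `H¹(ℂℙ¹, T₂)` is
one-dimensional, spanned by the class of `w = (0, 0, 0, (1/2)x⁻¹, −(1/2)x⁻², x⁻³)`. -/
theorem stmt_11 (w : V)
    (hw : w = ![0, 0, 0, (1 / 2 : ℂ) • T (-1), -((1 / 2 : ℂ) • T (-2)), T (-3)]) :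
    E''op w ∈ B 2 2 2 ∧ F''op 2 2 2 w ∈ B 2 2 2 ∧ w ∉ B 2 2 2 ∧
    ∀ z : V, E''op z ∈ B 2 2 2 → F''op 2 2 2 z ∈ B 2 2 2 →
      ∃ c : ℂ, z - c • w ∈ B 2 2 2 := by
  obtain rfl : w = w₀ := hw
  refine ⟨mem_B_iff.mpr isCoboundaryCoeff_E''op_w₀, mem_B_iff.mpr isCoboundaryCoeff_F''op_w₀,
    fun hmem => not_isCoboundaryCoeff_w₀ (mem_B_iff.mp hmem), fun z hE hF => ?_⟩
  exact ⟨2 * coeffL (z 3) (-1), mem_B_iff.mpr ((mem_B_iff.mp hE).sub_smul_w₀ (mem_B_iff.mp hF))⟩
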